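/- arXiv:1806.10154 — 4 statements merged into one kernel-verified Lean document; each statement's English description precedes it below -/
import Mathlib

section
/- Let P be a real square matrix on a finite state space S, let r ∈ S, let c > 0, and let P' be any matrix satisfying P' i r = c · P i r whenever i ≠ r, and P' i j = P i j whenever j ≠ r and j ≠ i (the diagonal entries of P' are arbitrary). Then for every loop j₀, j₁, …, j_k of pairwise distinct states (k ≥ 1): the forward loop product of P' equals c^e times the forward loop product of P, and the backward loop product of P' equals c^e times the backward loop product of P, where e = 1 if r is among j₀, …, j_k and e = 0 otherwise. -/
lemma col_op_prod_aux {S : Type*} [Fintype S] [DecidableEq S]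
    (P P' : Matrix S S ℝ) (r : S) (c : ℝ)
    (hcol : ∀ i, i ≠ r → P' i r = c * P i r)
    (hother : ∀ i j, j ≠ r → j ≠ i → P' i j = P i j)
    {n : ℕ} (s t : Fin n → S) (hst : ∀ i, s i ≠ t i) (ht : Function.Injective t) :
    (∏ i, P' (s i) (t i)) =
      c ^ (if ∃ i, t i = r then 1 else 0) * ∏ i, P (s i) (t i) := by
  by_cases h : ∃ i, t i = r
  · obtain ⟨a, ha⟩ := h
    rw [if_pos ⟨a, ha⟩, pow_one]
    rw [← Finset.mul_prod_erase Finset.univ _ (Finset.mem_univ a),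
        ← Finset.mul_prod_erase Finset.univ (fun i => P (s i) (t i)) (Finset.mem_univ a)]
    have h1 : P' (s a) (t a) = c * P (s a) (t a) := by
      rw [ha]; exact hcol _ (ha ▸ hst a)
    have h2 : ∀ i ∈ Finset.univ.erase a, P' (s i) (t i) = P (s i) (t i) := by
      intro i hi
      exact hother _ _ (fun hir => (Finset.ne_of_mem_erase hi) (ht (hir.trans ha.symm)))
        (hst i).symm
    rw [Finset.prod_congr rfl h2, h1]; ring
  · rw [if_neg h, pow_zero, one_mul]
    exact Finset.prod_congr rfl fun i _ => hother _ _ (fun hr => h ⟨i, hr⟩) (hst i).symm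

/-- A column multiplication operation on column `r` (off-diagonal entries of column `r`
scaled by `c > 0`, diagonal arbitrary, all other off-diagonal entries unchanged)
multiplies both the forward and the backward loop product of any loop of pairwise
distinct states by `c^e`, where `e = 1` if the loop passes through `r` and `e = 0`
otherwise. -/
theorem col_op_loop_products {S : Type*} [Fintype S] [DecidableEq S]
    (P P' : Matrix S S ℝ) (r : S) (c : ℝ) (hc : 0 < c)
    (hcol : ∀ i, i ≠ r → P' i r = c * P i r)
    (hother : ∀ i j, j ≠ r → j ≠ i → P' i j = P i j)
    (k : ℕ) (hk : 1 ≤ k) (j : Fin (k + 1) → S) (hj : Function.Injective j) :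
    (∏ i : Fin (k + 1), P' (j i) (j (i + 1))) =
      c ^ (if ∃ i, j i = r then 1 else 0) * ∏ i : Fin (k + 1), P (j i) (j (i + 1)) ∧
    (∏ i : Fin (k + 1), P' (j (i + 1)) (j i)) =
      c ^ (if ∃ i, j i = r then 1 else 0) * ∏ i : Fin (k + 1), P (j (i + 1)) (j i) := by
  have hone : (1 : Fin (k + 1)) ≠ 0 := by
    intro h
    have := congrArg Fin.val h
    simp [Fin.val_one', Nat.mod_eq_of_lt (by omega : 1 < k + 1)] at this
  have hne : ∀ i : Fin (k + 1), j i ≠ j (i + 1) := by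
    intro i h
    exact hone (left_eq_add.mp (hj h))
  have hiff : (∃ i : Fin (k + 1), j (i + 1) = r) ↔ (∃ i, j i = r) :=
    ⟨fun ⟨i, h⟩ => ⟨i + 1, h⟩, fun ⟨i, h⟩ => ⟨i - 1, by simpa⟩⟩
  have htinj : Function.Injective (fun i : Fin (k + 1) => j (i + 1)) :=
    fun a b h => by simpa using hj h
  constructor
  · have := col_op_prod_aux P P' r c hcol hother j (fun i => j (i + 1)) hne htinj
    simpa [hiff] using this
  · have := col_op_prod_aux P P' r c hcol hother (fun i => j (i + 1)) j
      (fun i => (hne i).symm) hj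
    exact this
end

section
/- (Theorem 3.1, row version.) Let P be a row-stochastic matrix on a finite state space S, let r ∈ S and c > 0 with c · ∑_{j ≠ r} P r j ≤ 1, and let P' be the matrix obtained by the row multiplication operation on row r: P' r j = c · P r j for j ≠ r, P' i j = P i j for i ≠ r, and P' r r = 1 − ∑_{j ≠ r} c · P r j. Then P' is row-stochastic, and P satisfies the Kolmogorov loop criterion if and only if P' satisfies the Kolmogorov loop criterion. -/
/-- `P` satisfies the Kolmogorov loop criterion: for every finite sequence
`j₀, …, j_k` of pairwise distinct states (`k ≥ 1`), the forward loop product equals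
the backward loop product. -/
def KolmogorovCriterion {S : Type*} [Fintype S] (P : Matrix S S ℝ) : Prop :=
  ∀ k : ℕ, 1 ≤ k → ∀ j : Fin (k + 1) → S, Function.Injective j →
    (∏ i : Fin (k + 1), P (j i) (j (i + 1))) = ∏ i : Fin (k + 1), P (j (i + 1)) (j i)

/-- Theorem 3.1, row version: the row multiplication operation on row `r` of a
row-stochastic matrix yields a row-stochastic matrix, and preserves the
reversibility status (i.e. the Kolmogorov loop criterion). -/
theorem row_op_preserves_reversibility {S : Type*} [Fintype S] [DecidableEq S]
    (P : Matrix S S ℝ) (hpos : ∀ i j, 0 ≤ P i j) (hrow : ∀ i, ∑ j, P i j = 1)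
    (r : S) (c : ℝ) (hc : 0 < c)
    (hsum : c * ∑ j ∈ Finset.univ.erase r, P r j ≤ 1)
    (P' : Matrix S S ℝ)
    (h1 : ∀ j, j ≠ r → P' r j = c * P r j)
    (h2 : ∀ i j, i ≠ r → P' i j = P i j)
    (h3 : P' r r = 1 - ∑ j ∈ Finset.univ.erase r, c * P r j) :
    ((∀ i j, 0 ≤ P' i j) ∧ ∀ i, ∑ j, P' i j = 1) ∧
    (KolmogorovCriterion P ↔ KolmogorovCriterion P') := by
  -- scaling relation on off-diagonal entries
  have key : ∀ a b : S, a ≠ b → P' a b = (if a = r then c else 1) * P a b := by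
    intro a b hab
    by_cases ha : a = r
    · subst ha
      rw [h1 b (fun h => hab h.symm), if_pos rfl]
    · rw [h2 a b ha, if_neg ha, one_mul]
  constructor
  · constructor
    · intro i j
      by_cases hi : i = r
      · rw [hi]
        by_cases hj : j = r
        · subst hj
          rw [h3, sub_nonneg, ← Finset.mul_sum]
          exact hsum
        · rw [h1 j hj]
          exact mul_nonneg hc.le (hpos _ _)
      · rw [h2 i j hi]; exact hpos _ _
    · intro i
      by_cases hi : i = r
      · rw [hi]
        rw [← Finset.add_sum_erase _ _ (Finset.mem_univ r), h3]
        have : ∑ j ∈ Finset.univ.erase r, P' r j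
            = ∑ j ∈ Finset.univ.erase r, c * P r j := by
          refine Finset.sum_congr rfl fun j hj => ?_
          exact h1 j (Finset.ne_of_mem_erase hj)
        rw [this]; ring
      · calc ∑ j, P' i j = ∑ j, P i j := by
              exact Finset.sum_congr rfl fun j _ => h2 i j hi
          _ = 1 := hrow i
  · -- main: loop products
    have main : ∀ (k : ℕ), 1 ≤ k → ∀ (j : Fin (k + 1) → S), Function.Injective j →
        (∏ i : Fin (k + 1), P' (j i) (j (i + 1)))
          = (∏ i : Fin (k + 1), (if j i = r then c else 1)) *
            ∏ i : Fin (k + 1), P (j i) (j (i + 1)) ∧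
        (∏ i : Fin (k + 1), P' (j (i + 1)) (j i))
          = (∏ i : Fin (k + 1), (if j i = r then c else 1)) *
            ∏ i : Fin (k + 1), P (j (i + 1)) (j i) := by
      intro k hk j hj
      have hne : ∀ i : Fin (k + 1), j i ≠ j (i + 1) := by
        intro i h
        have := hj h
        have h10 : (1 : Fin (k + 1)) = 0 := by
          have := congrArg (fun x => x - i) this
          simpa using this.symm
        have : (1 : Fin (k+1)).val = (0 : Fin (k+1)).val := congrArg Fin.val h10
        simp [Fin.val_one, Nat.mod_eq_of_lt (by omega : 1 < k + 1)] at this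
      constructor
      · rw [← Finset.prod_mul_distrib]
        exact Finset.prod_congr rfl fun i _ => key _ _ (hne i)
      · have hshift : (∏ i : Fin (k + 1), (if j i = r then c else 1))
            = ∏ i : Fin (k + 1), (if j (i + 1) = r then c else 1) :=
          (Equiv.prod_comp (Equiv.addRight (1 : Fin (k+1)))
            (fun i => (if j i = r then c else 1))).symm
        rw [hshift, ← Finset.prod_mul_distrib]
        exact Finset.prod_congr rfl fun i _ => key _ _ (hne i).symm
    have hDne : ∀ (k : ℕ) (j : Fin (k + 1) → S),
        (∏ i : Fin (k + 1), (if j i = r then c else 1)) ≠ 0 := by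
      intro k j
      refine Finset.prod_ne_zero_iff.mpr fun i _ => ?_
      split <;> [exact hc.ne' ; exact one_ne_zero]
    constructor
    · intro hP k hk j hj
      obtain ⟨hf, hb⟩ := main k hk j hj
      rw [hf, hb, hP k hk j hj]
    · intro hP' k hk j hj
      obtain ⟨hf, hb⟩ := main k hk j hj
      have := hP' k hk j hj
      rw [hf, hb] at this
      exact mul_left_cancel₀ (hDne k j) this
end

section
/- (Kolmogorov's criterion.) Let P be an irreducible row-stochastic matrix on a finite nonempty state space S. Then there exists a probability vector π with strictly positive entries such that P satisfies detailed balance with respect to π if and only if P satisfies the Kolmogorov loop criterion: for every finite sequence j₀, j₁, …, j_k of pairwise distinct states (k ≥ 1), P j₀ j₁ · P j₁ j₂ ⋯ P j_k j₀ = P j₀ j_k · P j_k j_{k-1} ⋯ P j₁ j₀. -/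
namespace KolAux

variable {S : Type*}

/-- endpoint of a path starting at `a` through vertex list `l`. -/
def pathEnd : S → List S → S
  | a, [] => a
  | _, b :: l => pathEnd b l

/-- forward product of transition probabilities along a path. -/
def pathProd (P : Matrix S S ℝ) : S → List S → ℝ
  | _, [] => 1
  | a, b :: l => P a b * pathProd P b l

/-- backward product of transition probabilities along a path. -/
def revProd (P : Matrix S S ℝ) : S → List S → ℝ
  | _, [] => 1
  | a, b :: l => P b a * revProd P b l

@[simp] lemma pathEnd_nil (a : S) : pathEnd a ([] : List S) = a := rfl
@[simp] lemma pathEnd_cons (a b : S) (l : List S) : pathEnd a (b :: l) = pathEnd b l := rfl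
@[simp] lemma pathProd_nil (P : Matrix S S ℝ) (a : S) : pathProd P a [] = 1 := rfl
@[simp] lemma pathProd_cons (P : Matrix S S ℝ) (a b : S) (l : List S) :
    pathProd P a (b :: l) = P a b * pathProd P b l := rfl
@[simp] lemma revProd_nil (P : Matrix S S ℝ) (a : S) : revProd P a [] = 1 := rfl
@[simp] lemma revProd_cons (P : Matrix S S ℝ) (a b : S) (l : List S) :
    revProd P a (b :: l) = P b a * revProd P b l := rfl

lemma pathEnd_append (a : S) (u v : List S) :
    pathEnd a (u ++ v) = pathEnd (pathEnd a u) v := by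
  induction u generalizing a with
  | nil => rfl
  | cons b t ih => simp [ih]

@[simp] lemma pathEnd_concat (a b : S) (u : List S) :
    pathEnd a (u ++ [b]) = b := by
  rw [pathEnd_append]; rfl

lemma pathProd_append (P : Matrix S S ℝ) (a : S) (u v : List S) :
    pathProd P a (u ++ v) = pathProd P a u * pathProd P (pathEnd a u) v := by
  induction u generalizing a with
  | nil => simp
  | cons b t ih => simp [ih, mul_assoc]

lemma revProd_append (P : Matrix S S ℝ) (a : S) (u v : List S) :
    revProd P a (u ++ v) = revProd P a u * revProd P (pathEnd a u) v := by
  induction u generalizing a with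
  | nil => simp
  | cons b t ih => simp [ih, mul_assoc]

lemma pathProd_nonneg (P : Matrix S S ℝ) (hpos : ∀ i j, 0 ≤ P i j) (a : S) (l : List S) :
    0 ≤ pathProd P a l := by
  induction l generalizing a with
  | nil => simp
  | cons b t ih => exact mul_nonneg (hpos a b) (ih b)

lemma revProd_nonneg (P : Matrix S S ℝ) (hpos : ∀ i j, 0 ≤ P i j) (a : S) (l : List S) :
    0 ≤ revProd P a l := by
  induction l generalizing a with
  | nil => simp
  | cons b t ih => exact mul_nonneg (hpos b a) (ih b)

lemma dropLast_append_pathEnd (a : S) (l : List S) (hl : l ≠ []) :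
    l.dropLast ++ [pathEnd a l] = l := by
  induction l generalizing a with
  | nil => simp at hl
  | cons b t ih =>
    cases t with
    | nil => simp
    | cons c s =>
      simp only [pathEnd_cons, List.dropLast_cons₂, List.cons_append]
      rw [show pathEnd c s = pathEnd b (c::s) from rfl, ih b (by simp)]

/-- the vertex list of the reversed path. -/
def revList (a : S) (l : List S) : List S := ((a :: l).dropLast).reverse

@[simp] lemma revList_nil (a : S) : revList a ([] : List S) = [] := rfl

lemma revList_cons (a b : S) (t : List S) :
    revList a (b :: t) = revList b t ++ [a] := by
  cases t with
  | nil => rfl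
  | cons c s => simp [revList]

lemma pathEnd_revList (a : S) (l : List S) :
    pathEnd (pathEnd a l) (revList a l) = a := by
  cases l with
  | nil => rfl
  | cons b t => rw [revList_cons]; simp

lemma pathProd_revList (P : Matrix S S ℝ) (a : S) (l : List S) :
    pathProd P (pathEnd a l) (revList a l) = revProd P a l := by
  induction l generalizing a with
  | nil => simp
  | cons b t ih =>
    rw [revList_cons, pathEnd_cons, pathProd_append, ih, pathEnd_revList]
    simp [mul_comm]

lemma revProd_revList (P : Matrix S S ℝ) (a : S) (l : List S) :
    revProd P (pathEnd a l) (revList a l) = pathProd P a l := by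
  induction l generalizing a with
  | nil => simp
  | cons b t ih =>
    rw [revList_cons, pathEnd_cons, revProd_append, ih, pathEnd_revList]
    simp [mul_comm]

lemma not_nodup_split {l : List S} (h : ¬ l.Nodup) :
    ∃ (b : S) (u v w : List S), l = u ++ b :: v ++ b :: w := by
  induction l with
  | nil => simp at h
  | cons x t ih =>
    by_cases hx : x ∈ t
    · obtain ⟨s, t', rfl⟩ := List.append_of_mem hx
      exact ⟨x, [], s, t', by simp⟩
    · have : ¬ t.Nodup := by
        intro hnd; exact h (List.nodup_cons.mpr ⟨hx, hnd⟩)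
      obtain ⟨b, u, v, w, rfl⟩ := ih this
      exact ⟨b, x :: u, v, w, by simp⟩

lemma pathProd_eq_finProd (P : Matrix S S ℝ) (l : List S) (a : S) :
    pathProd P a l = ∏ i : Fin l.length, P ((a :: l).get i.castSucc) ((a :: l).get i.succ) := by
  induction l generalizing a with
  | nil => simp [pathProd]
  | cons b t ih =>
    rw [show pathProd P a (b :: t) = P a b * pathProd P b t from rfl, ih b]
    show _ = ∏ i : Fin (t.length + 1), P ((a :: b :: t).get i.castSucc) ((a :: b :: t).get i.succ)
    rw [Fin.prod_univ_succ]
    congr 1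


lemma pathProd_cycle (P : Matrix S S ℝ) (a : S) (l' : List S)
    (j : Fin (l'.length + 1) → S) (hj : ∀ i : Fin (l'.length + 1), j i = (a :: l').get i) :
    pathProd P a (l' ++ [a]) = ∏ i : Fin (l'.length + 1), P (j i) (j (i + 1)) := by
  have hlen : (l' ++ [a]).length = l'.length + 1 := by simp
  rw [pathProd_eq_finProd]
  rw [← Fintype.prod_equiv (finCongr hlen.symm)
      (fun i : Fin (l'.length+1) => P ((a :: (l' ++ [a])).get ((finCongr hlen.symm i)).castSucc)
        ((a :: (l' ++ [a])).get ((finCongr hlen.symm i)).succ))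
      _ (fun i => rfl)]
  apply Finset.prod_congr rfl
  intro i _
  congr 1
  · show ((a :: l') ++ [a]).get ⟨i.val, _⟩ = j i
    rw [hj i]
    simp only [List.get_eq_getElem]
    rw [List.getElem_append_left]
  · show ((a :: l') ++ [a]).get ⟨i.val + 1, _⟩ = j (i + 1)
    rw [hj (i + 1)]
    simp only [List.get_eq_getElem]
    rcases eq_or_ne i (Fin.last l'.length) with h | h
    · subst h
      have h1 : (Fin.last l'.length + 1) = 0 := by
        simp
      rw [h1]
      have h2 : (Fin.last l'.length).val + 1 = (a :: l').length := by simp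
      rw [List.getElem_append_right (by simp [h2])]
      simp [h2]
    · have hv : ((i + 1 : Fin (l'.length + 1))).val = i.val + 1 := by
        rw [Fin.val_add_one]
        simp [h]
      have hlt : i.val < l'.length := Fin.val_lt_last h
      rw [List.getElem_append_left (by simp; omega)]
      congr 1
      exact hv.symm

lemma revProd_eq_finProd (P : Matrix S S ℝ) (l : List S) (a : S) :
    revProd P a l = ∏ i : Fin l.length, P ((a :: l).get i.succ) ((a :: l).get i.castSucc) := by
  induction l generalizing a with
  | nil => simp [revProd]
  | cons b t ih =>
    rw [show revProd P a (b :: t) = P b a * revProd P b t from rfl, ih b]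
    show _ = ∏ i : Fin (t.length + 1), P ((a :: b :: t).get i.succ) ((a :: b :: t).get i.castSucc)
    rw [Fin.prod_univ_succ]
    congr 1

lemma revProd_cycle (P : Matrix S S ℝ) (a : S) (l' : List S)
    (j : Fin (l'.length + 1) → S) (hj : ∀ i : Fin (l'.length + 1), j i = (a :: l').get i) :
    revProd P a (l' ++ [a]) = ∏ i : Fin (l'.length + 1), P (j (i + 1)) (j i) := by
  have hlen : (l' ++ [a]).length = l'.length + 1 := by simp
  rw [revProd_eq_finProd]
  rw [← Fintype.prod_equiv (finCongr hlen.symm)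
      (fun i : Fin (l'.length+1) => P ((a :: (l' ++ [a])).get ((finCongr hlen.symm i)).succ)
        ((a :: (l' ++ [a])).get ((finCongr hlen.symm i)).castSucc))
      _ (fun i => rfl)]
  apply Finset.prod_congr rfl
  intro i _
  congr 1
  · show ((a :: l') ++ [a]).get ⟨i.val + 1, _⟩ = j (i + 1)
    rw [hj (i + 1)]
    simp only [List.get_eq_getElem]
    rcases eq_or_ne i (Fin.last l'.length) with h | h
    · subst h
      have h1 : (Fin.last l'.length + 1) = 0 := by
        simp
      rw [h1]
      have h2 : (Fin.last l'.length).val + 1 = (a :: l').length := by simp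
      rw [List.getElem_append_right (by simp [h2])]
      simp [h2]
    · have hv : ((i + 1 : Fin (l'.length + 1))).val = i.val + 1 := by
        rw [Fin.val_add_one]
        simp [h]
      have hlt : i.val < l'.length := Fin.val_lt_last h
      rw [List.getElem_append_left (by simp; omega)]
      congr 1
      exact hv.symm
  · show ((a :: l') ++ [a]).get ⟨i.val, _⟩ = j i
    rw [hj i]
    simp only [List.get_eq_getElem]
    rw [List.getElem_append_left]

theorem kol_all {S : Type*} (P : Matrix S S ℝ)
    (hK : ∀ k : ℕ, 1 ≤ k → ∀ j : Fin (k + 1) → S, Function.Injective j →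
        (∏ i : Fin (k + 1), P (j i) (j (i + 1))) = ∏ i : Fin (k + 1), P (j (i + 1)) (j i)) :
    ∀ n (l : List S) (a : S), l.length ≤ n → l ≠ [] → pathEnd a l = a →
      pathProd P a l = revProd P a l := by
  intro n
  induction n with
  | zero =>
    intro l a hlen hne _
    cases l with
    | nil => simp at hne
    | cons x t => simp at hlen
  | succ n ih =>
    classical
    intro l a hlen hne hend
    have hsplit : l.dropLast ++ [a] = l := by
      conv_lhs => rw [← hend]
      exact dropLast_append_pathEnd a l hne
    by_cases hnd : (a :: l.dropLast).Nodup
    · -- base case: a simple loop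
      cases hLd : l.dropLast with
      | nil =>
        have hla : l = [a] := by rw [← hsplit, hLd]; rfl
        subst hla
        simp
      | cons b t =>
        rw [hLd] at hnd
        set l' : List S := b :: t with hl'
        have h1 : 1 ≤ l'.length := by simp [hl']
        have hinj : Function.Injective (fun i : Fin (l'.length + 1) => (a :: l').get i) :=
          List.nodup_iff_injective_get.mp hnd
        have hKk := hK l'.length h1 (fun i : Fin (l'.length + 1) => (a :: l').get i) hinj
        have hrw : l = l' ++ [a] := by rw [← hsplit, hLd]
        rw [hrw,
          pathProd_cycle P a l' (fun i : Fin (l'.length + 1) => (a :: l').get i) (fun i => rfl),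
          revProd_cycle P a l' (fun i : Fin (l'.length + 1) => (a :: l').get i) (fun i => rfl),
          hKk]
    · obtain ⟨b, u, v, w, hdup⟩ := not_nodup_split hnd
      cases u with
      | nil =>
        simp only [List.nil_append] at hdup
        have hab : a = b := by injection hdup with h1 h2
        have hld : l.dropLast = v ++ b :: w := by injection hdup with h1 h2
        subst hab
        have hl2 : l = (v ++ [a]) ++ (w ++ [a]) := by
          rw [← hsplit, hld]
          simp
        have hlen2 : l.length = v.length + w.length + 2 := by
          rw [hl2]; simp; omega
        have ihv := ih (v ++ [a]) a (by simp; omega) (by simp) (by simp)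
        have ihw := ih (w ++ [a]) a (by simp; omega) (by simp) (by simp)
        rw [hl2, pathProd_append, revProd_append, pathEnd_concat, ihv, ihw]
      | cons a' u' =>
        have hab : a = a' := by injection hdup with h1 h2
        have hld : l.dropLast = u' ++ b :: v ++ b :: w := by injection hdup with h1 h2
        subst hab
        have hl2 : l = (u' ++ [b]) ++ ((v ++ [b]) ++ (w ++ [a])) := by
          rw [← hsplit, hld]
          simp
        have hlen2 : l.length = u'.length + v.length + w.length + 3 := by
          rw [hl2]; simp; omega
        have hr : pathEnd a (u' ++ [b]) = b := pathEnd_concat a b u'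
        have ihsub := ih (v ++ [b]) b (by simp; omega) (by simp) (by simp)
        -- remaining cycle
        have hrem : pathProd P a ((u' ++ [b]) ++ (w ++ [a])) =
            revProd P a ((u' ++ [b]) ++ (w ++ [a])) :=
          ih ((u' ++ [b]) ++ (w ++ [a])) a (by simp; omega) (by simp)
            (by rw [pathEnd_append, hr]; simp)
        rw [pathProd_append, pathEnd_concat] at hrem
        rw [revProd_append, pathEnd_concat] at hrem
        rw [hl2, pathProd_append P a (u' ++ [b]), revProd_append P a (u' ++ [b]), hr,
          pathProd_append P b (v ++ [b]), revProd_append P b (v ++ [b]), pathEnd_concat, ihsub]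
        linear_combination revProd P b (v ++ [b]) * hrem

lemma pow_entry_nonneg {S : Type*} [Fintype S] [DecidableEq S] (P : Matrix S S ℝ)
    (hpos : ∀ i j, 0 ≤ P i j) : ∀ (k : ℕ) (i j : S), 0 ≤ (P ^ k) i j := by
  intro k
  induction k with
  | zero => intro i j; by_cases h : i = j <;> simp [Matrix.one_apply, h]
  | succ k ihk =>
    intro i j
    rw [pow_succ', Matrix.mul_apply]
    exact Finset.sum_nonneg fun m _ => mul_nonneg (hpos i m) (ihk m j)

lemma exists_pos_path {S : Type*} [Fintype S] [DecidableEq S] (P : Matrix S S ℝ)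
    (hpos : ∀ i j, 0 ≤ P i j) :
    ∀ (k : ℕ) (i j : S), 0 < (P ^ k) i j →
      ∃ l : List S, l.length = k ∧ pathEnd i l = j ∧ 0 < pathProd P i l := by
  intro k
  induction k with
  | zero =>
    intro i j h
    rw [pow_zero] at h
    have : i = j := by
      by_contra hij
      rw [Matrix.one_apply_ne hij] at h
      exact lt_irrefl 0 h
    exact ⟨[], rfl, this, by simp⟩
  | succ k ihk =>
    intro i j h
    rw [pow_succ', Matrix.mul_apply] at h
    have : ∃ m, 0 < P i m * (P ^ k) m j := by
      by_contra hc
      push_neg at hc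
      have : ∑ m, P i m * (P ^ k) m j ≤ 0 := Finset.sum_nonpos fun m _ => hc m
      linarith
    obtain ⟨m, hm⟩ := this
    rcases mul_pos_iff.mp hm with ⟨h1, h2⟩ | ⟨h1, h2⟩
    · obtain ⟨l, hl1, hl2, hl3⟩ := ihk m j h2
      exact ⟨m :: l, by simp [hl1], hl2, mul_pos h1 hl3⟩
    · exact absurd h1 (not_lt.mpr (hpos i m))

section Main
variable {S : Type*} [Fintype S] [DecidableEq S] [Nonempty S]
variable (P : Matrix S S ℝ)

lemma rev_pos (hpos : ∀ i j, 0 ≤ P i j)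
    (hirr : ∀ i j : S, ∃ k : ℕ, 1 ≤ k ∧ 0 < (P ^ k) i j)
    (hK : ∀ k : ℕ, 1 ≤ k → ∀ j : Fin (k + 1) → S, Function.Injective j →
        (∏ i : Fin (k + 1), P (j i) (j (i + 1))) = ∏ i : Fin (k + 1), P (j (i + 1)) (j i))
    {a b : S} (h : 0 < P a b) : 0 < P b a := by
  obtain ⟨k, hk1, hk2⟩ := hirr b a
  obtain ⟨l, hl1, hl2, hl3⟩ := exists_pos_path P hpos k b a hk2
  have hcyc : pathProd P a (b :: l) = revProd P a (b :: l) :=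
    kol_all P hK (b :: l).length (b :: l) a le_rfl (by simp) (by simp [hl2])
  have hpp : 0 < pathProd P a (b :: l) := by
    rw [pathProd_cons]; exact mul_pos h hl3
  rw [hcyc, revProd_cons] at hpp
  rcases mul_pos_iff.mp hpp with ⟨h1, _⟩ | ⟨h1, _⟩
  · exact h1
  · exact absurd h1 (not_lt.mpr (hpos b a))

lemma revProd_pos (hpos : ∀ i j, 0 ≤ P i j)
    (hirr : ∀ i j : S, ∃ k : ℕ, 1 ≤ k ∧ 0 < (P ^ k) i j)
    (hK : ∀ k : ℕ, 1 ≤ k → ∀ j : Fin (k + 1) → S, Function.Injective j →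
        (∏ i : Fin (k + 1), P (j i) (j (i + 1))) = ∏ i : Fin (k + 1), P (j (i + 1)) (j i)) :
    ∀ (l : List S) (a : S), 0 < pathProd P a l → 0 < revProd P a l := by
  intro l
  induction l with
  | nil => intro a _; simp
  | cons b t ih =>
    intro a h
    rw [pathProd_cons] at h
    rcases mul_pos_iff.mp h with ⟨h1, h2⟩ | ⟨h1, _⟩
    · rw [revProd_cons]
      exact mul_pos (rev_pos P hpos hirr hK h1) (ih b h2)
    · exact absurd h1 (not_lt.mpr (hpos a b))

/-- path independence -/
lemma path_indep
    (hK : ∀ k : ℕ, 1 ≤ k → ∀ j : Fin (k + 1) → S, Function.Injective j →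
        (∏ i : Fin (k + 1), P (j i) (j (i + 1))) = ∏ i : Fin (k + 1), P (j (i + 1)) (j i))
    (o : S) (p q : List S) (hp : p ≠ []) (hpq : pathEnd o p = pathEnd o q) :
    pathProd P o p * revProd P o q = revProd P o p * pathProd P o q := by
  have hcyc : pathProd P o (p ++ revList o q) = revProd P o (p ++ revList o q) :=
    kol_all P hK _ _ o le_rfl (by simp [hp])
      (by rw [pathEnd_append, hpq, pathEnd_revList])
  rw [pathProd_append, revProd_append, hpq, pathProd_revList, revProd_revList] at hcyc
  exact hcyc

end Main
end KolAux


open KolAux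

/-- Kolmogorov's criterion: an irreducible row-stochastic matrix on a finite nonempty
state space admits a strictly positive probability vector satisfying detailed balance
if and only if every loop of pairwise distinct states has equal forward and backward
loop products. -/
theorem kolmogorov_criterion {S : Type*} [Fintype S] [DecidableEq S] [Nonempty S]
    (P : Matrix S S ℝ) (hpos : ∀ i j, 0 ≤ P i j) (hrow : ∀ i, ∑ j, P i j = 1)
    (hirr : ∀ i j : S, ∃ k : ℕ, 1 ≤ k ∧ 0 < (P ^ k) i j) :
    (∃ π : S → ℝ, (∀ i, 0 < π i) ∧ (∑ i, π i = 1) ∧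
        ∀ i j, π i * P i j = π j * P j i) ↔
      (∀ k : ℕ, 1 ≤ k → ∀ j : Fin (k + 1) → S, Function.Injective j →
        (∏ i : Fin (k + 1), P (j i) (j (i + 1))) =
          ∏ i : Fin (k + 1), P (j (i + 1)) (j i)) := by
  constructor
  · rintro ⟨π, hπpos, hπsum, hdb⟩ k hk j hj
    have h1 : (∏ i : Fin (k + 1), π (j i)) * (∏ i : Fin (k + 1), P (j i) (j (i + 1))) =
        (∏ i : Fin (k + 1), π (j (i + 1))) * (∏ i : Fin (k + 1), P (j (i + 1)) (j i)) := by
      rw [← Finset.prod_mul_distrib, ← Finset.prod_mul_distrib]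
      exact Finset.prod_congr rfl fun i _ => hdb (j i) (j (i + 1))
    have h2 : (∏ i : Fin (k + 1), π (j (i + 1))) = ∏ i : Fin (k + 1), π (j i) :=
      Fintype.prod_equiv (Equiv.addRight (1 : Fin (k + 1)))
        (fun i => π (j (i + 1))) (fun i => π (j i)) (fun x => rfl)
    rw [h2] at h1
    have hprodpos : 0 < ∏ i : Fin (k + 1), π (j i) :=
      Finset.prod_pos fun i _ => hπpos _
    exact mul_left_cancel₀ (ne_of_gt hprodpos) h1
  · intro hK
    classical
    have o : S := Classical.arbitrary S
    have hex : ∀ i : S, ∃ l : List S, l ≠ [] ∧ pathEnd o l = i ∧ 0 < pathProd P o l := by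
      intro i
      obtain ⟨k, hk1, hk2⟩ := hirr o i
      obtain ⟨l, hl1, hl2, hl3⟩ := exists_pos_path P hpos k o i hk2
      refine ⟨l, ?_, hl2, hl3⟩
      intro hnil
      rw [hnil] at hl1
      simp at hl1
      omega
    choose p hne hend hpp using hex
    set w : S → ℝ := fun i => pathProd P o (p i) / revProd P o (p i) with hw
    have hrp : ∀ i, 0 < revProd P o (p i) := fun i => revProd_pos P hpos hirr hK _ _ (hpp i)
    have hwpos : ∀ i, 0 < w i := fun i => div_pos (hpp i) (hrp i)
    have hdb : ∀ i j, w i * P i j = w j * P j i := by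
      intro i j
      rcases (hpos i j).lt_or_eq with hij | hij
      · have hji : 0 < P j i := rev_pos P hpos hirr hK hij
        have hpi := path_indep P hK o (p i ++ [j]) (p j) (by simp)
          (by rw [pathEnd_concat, hend j])
        rw [pathProd_append, revProd_append, hend i] at hpi
        simp only [pathProd_cons, revProd_cons, pathProd_nil, revProd_nil, mul_one] at hpi
        show pathProd P o (p i) / revProd P o (p i) * P i j =
          pathProd P o (p j) / revProd P o (p j) * P j i
        rw [div_mul_eq_mul_div, div_mul_eq_mul_div,
          div_eq_div_iff (ne_of_gt (hrp i)) (ne_of_gt (hrp j))]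
        linear_combination hpi
      · have hji : P j i = 0 := by
          by_contra hc
          have h2 : 0 < P j i := (hpos j i).lt_of_ne (Ne.symm hc)
          have := rev_pos P hpos hirr hK h2
          rw [← hij] at this
          exact lt_irrefl 0 this
        rw [← hij, hji]
        ring
    set T := ∑ m, w m with hT
    have hTpos : 0 < T := Finset.sum_pos (fun m _ => hwpos m) Finset.univ_nonempty
    refine ⟨fun i => w i / T, fun i => div_pos (hwpos i) hTpos, ?_, ?_⟩
    · rw [← Finset.sum_div]
      exact div_self (ne_of_gt hTpos)
    · intro i j
      show w i / T * P i j = w j / T * P j i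
      have h := hdb i j
      field_simp
      linear_combination h
end

section
/- (Theorem 3.3, substantive direction.) Let P be a row-stochastic matrix on a finite state space S, and let τ be a probability vector with τ i > 0 for all i such that P satisfies detailed balance with respect to τ. Suppose the graph G on S, with an edge between distinct states i and j whenever P i j = P j i and P i j ≠ 0, is connected. Then P is symmetric: P i j = P j i for all i, j. -/
/-- Theorem 3.3, substantive direction: if `P` satisfies detailed balance with respect
to a strictly positive probability vector `τ`, and the graph whose edges join distinct
states `i ≠ j` with `P i j = P j i ≠ 0` is connected, then `P` is symmetric. -/
theorem symmetric_of_detailed_balance_connected {S : Type*} [Fintype S]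
    (P : Matrix S S ℝ) (hpos : ∀ i j, 0 ≤ P i j) (hrow : ∀ i, ∑ j, P i j = 1)
    (τ : S → ℝ) (hτpos : ∀ i, 0 < τ i) (hτ1 : ∑ i, τ i = 1)
    (hdb : ∀ i j, τ i * P i j = τ j * P j i)
    (hconn : (SimpleGraph.fromRel fun i j => P i j = P j i ∧ P i j ≠ 0).Connected) :
    ∀ i j, P i j = P j i := by
  -- Step 1: adjacent states have equal τ
  have key : ∀ i j, (SimpleGraph.fromRel fun i j => P i j = P j i ∧ P i j ≠ 0).Adj i j →
      τ i = τ j := by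
    intro i j h
    rcases h with ⟨hne, ⟨hsym, hnz⟩ | ⟨hsym, hnz⟩⟩
    · have := hdb i j
      rw [hsym] at this hnz
      exact mul_right_cancel₀ hnz this
    · have := hdb j i
      rw [hsym] at this hnz
      exact (mul_right_cancel₀ hnz this).symm
  -- Step 2: τ constant by connectedness
  have hconst : ∀ i j, τ i = τ j := by
    intro i j
    obtain ⟨w⟩ := hconn i j
    induction w with
    | nil => rfl
    | cons h _ ih => exact (key _ _ h).trans ih
  intro i j
  have := hdb i j
  rw [hconst i j] at this
  exact mul_left_cancel₀ (hτpos j).ne' this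
end
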